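/- arXiv:1006.4709 — 3 statements merged into one kernel-verified Lean document; each statement's English description precedes it below -/
import Mathlib

section
/- Let G = wW_Iw⁻¹ be a parabolic subgroup of a Coxeter group W with w ∈ W and I ⊆ S, and let w^I be the unique shortest element of the coset wW_I. Then the canonical simple system of G is Π(G) = w^I · Π_I and the canonical generating set is S(G) = w^I I (w^I)⁻¹. -/
namespace CoxPaper

variable {B W : Type*} [Group W]

/-- The geometric representation space of a Coxeter system with generators indexed by `B`. -/
abbrev V (B : Type*) := B →₀ ℝ

/-- The simple root corresponding to the index `i`. -/
noncomputable def sroot (i : B) : V B := Finsupp.single i 1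

/-- The canonical bilinear form on `V B` determined by a Coxeter matrix
(`M i j = 0` encodes `m(s_i, s_j) = ∞`). -/
noncomputable def form (M : CoxeterMatrix B) (x y : V B) : ℝ :=
  x.sum fun i xi => y.sum fun j yj =>
    xi * yj * (if M i j = 0 then -1 else -Real.cos (Real.pi / (M i j : ℝ)))

/-- `ρ` is the geometric representation of the Coxeter system `cs`. -/
def IsGeomRep (M : CoxeterMatrix B) (cs : CoxeterSystem M W)
    (rho : W →* (V B ≃ₗ[ℝ] V B)) : Prop :=
  ∀ (i : B) (x : V B), rho (cs.simple i) x = x - (2 * form M x (sroot i)) • sroot i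

variable {M : CoxeterMatrix B}

/-- The root system `Φ`: the orbit of the simple roots. -/
def Roots (rho : W →* (V B ≃ₗ[ℝ] V B)) : Set (V B) :=
  {v | ∃ (w : W) (i : B), rho w (sroot i) = v}

/-- A positive root: a root all of whose coordinates are nonnegative. -/
def IsPosRoot (rho : W →* (V B ≃ₗ[ℝ] V B)) (v : V B) : Prop :=
  v ∈ Roots rho ∧ ∀ i, 0 ≤ v i

/-- `t` is the reflection `s_γ` corresponding to the root `γ`. -/
def ReflOf (cs : CoxeterSystem M W) (rho : W →* (V B ≃ₗ[ℝ] V B))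
    (γ : V B) (t : W) : Prop :=
  ∃ (w : W) (i : B), rho w (sroot i) = γ ∧ w * cs.simple i * w⁻¹ = t

/-- A reflection subgroup: a subgroup generated by reflections. -/
def IsReflSubgroup (cs : CoxeterSystem M W) (G : Subgroup W) : Prop :=
  ∃ T : Set W, (∀ t ∈ T, cs.IsReflection t) ∧ G = Subgroup.closure T

/-- `Φ(G)`: the set of roots whose reflections lie in `G`. -/
def RootsOf (cs : CoxeterSystem M W) (rho : W →* (V B ≃ₗ[ℝ] V B))
    (G : Subgroup W) : Set (V B) :=
  {γ | γ ∈ Roots rho ∧ ∃ t ∈ G, ReflOf cs rho γ t}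

/-- `Π(G)`: the canonical simple system of a reflection subgroup `G`, i.e. the
positive roots of `Φ(G)` that are indecomposable into positive linear combinations
of positive roots of `Φ(G)`. -/
def SimpleOf (cs : CoxeterSystem M W) (rho : W →* (V B ≃ₗ[ℝ] V B))
    (G : Subgroup W) : Set (V B) :=
  {γ | γ ∈ RootsOf cs rho G ∧ IsPosRoot rho γ ∧
    ∀ (k : ℕ) (c : Fin k → ℝ) (β : Fin k → V B),
      (∀ m, 0 < c m) → (∀ m, β m ∈ RootsOf cs rho G ∧ IsPosRoot rho (β m)) →
      γ = ∑ m, c m • β m → ∀ m, β m = γ}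

/-- `S(G)`: the canonical generating set of a reflection subgroup `G`. -/
def CanGens (cs : CoxeterSystem M W) (rho : W →* (V B ≃ₗ[ℝ] V B))
    (G : Subgroup W) : Set W :=
  {t | ∃ γ ∈ SimpleOf cs rho G, ReflOf cs rho γ t}

/-- The standard parabolic subgroup `W_I`. -/
def WI (cs : CoxeterSystem M W) (I : Set B) : Subgroup W :=
  Subgroup.closure (cs.simple '' I)

/-- The conjugate `w H w⁻¹` of a subgroup `H`. -/
def conjSub (w : W) (H : Subgroup W) : Subgroup W :=
  Subgroup.map (MulAut.conj w).toMonoidHom H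

/-- A parabolic subgroup: a conjugate of a standard parabolic subgroup. -/
def IsParabolic (cs : CoxeterSystem M W) (P : Subgroup W) : Prop :=
  ∃ (w : W) (I : Set B), P = conjSub w (WI cs I)

/-- A parabolic subgroup of finite rank `n`. -/
def IsParabolicOfRank (cs : CoxeterSystem M W) (n : ℕ) (P : Subgroup W) : Prop :=
  ∃ (w : W) (I : Finset B), I.card = n ∧ P = conjSub w (WI cs (↑I : Set B))

/-- A locally parabolic subgroup: a reflection subgroup each finite subset of whose
canonical generating set is conjugate in `W` to a subset of `S`. -/
def IsLocallyParabolic (cs : CoxeterSystem M W) (rho : W →* (V B ≃ₗ[ℝ] V B))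
    (G : Subgroup W) : Prop :=
  IsReflSubgroup cs G ∧ ∀ X : Finset W, (↑X : Set W) ⊆ CanGens cs rho G →
    ∃ w : W, (fun t => w * t * w⁻¹) '' (↑X : Set W) ⊆ Set.range cs.simple


section FormBasics

variable (M : CoxeterMatrix B)

/-- The matrix of the bilinear form. -/
noncomputable def kM (i j : B) : ℝ := if M i j = 0 then -1 else -Real.cos (Real.pi / (M i j : ℝ))

lemma kM_symm (i j : B) : kM M i j = kM M j i := by
  unfold kM
  rw [M.isSymm.apply i j]

lemma kM_diag (i : B) : kM M i i = 1 := by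
  unfold kM
  rw [M.diagonal i]
  norm_num

lemma form_eq_lc (x y : V B) :
    form M x y = Finsupp.linearCombination ℝ
      (fun i => Finsupp.linearCombination ℝ (kM M i) y) x := by
  rw [form, Finsupp.linearCombination_apply]
  apply Finsupp.sum_congr
  intro i _
  rw [Finsupp.linearCombination_apply, smul_eq_mul, Finsupp.mul_sum]
  apply Finsupp.sum_congr
  intro j _
  show x i * y j * kM M i j = x i * (y j * kM M i j)
  ring

lemma form_add_left (x x' y : V B) : form M (x + x') y = form M x y + form M x' y := by
  simp [form_eq_lc]

lemma form_smul_left (c : ℝ) (x y : V B) : form M (c • x) y = c * form M x y := by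
  simp [form_eq_lc]

lemma form_sub_left (x x' y : V B) : form M (x - x') y = form M x y - form M x' y := by
  simp [form_eq_lc]

lemma form_add_right (x y y' : V B) : form M x (y + y') = form M x y + form M x y' := by
  simp only [form_eq_lc, map_add]
  rw [Finsupp.linearCombination_apply, Finsupp.linearCombination_apply,
    Finsupp.linearCombination_apply]
  rw [← Finsupp.sum_add]
  apply Finsupp.sum_congr
  intro i _
  simp [smul_eq_mul, mul_add]

lemma form_smul_right (c : ℝ) (x y : V B) : form M x (c • y) = c * form M x y := by
  simp only [form_eq_lc, map_smul, smul_eq_mul]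
  rw [Finsupp.linearCombination_apply, Finsupp.linearCombination_apply, Finsupp.mul_sum]
  apply Finsupp.sum_congr
  intro i _
  simp [smul_eq_mul]
  ring

lemma form_sub_right (x y y' : V B) : form M x (y - y') = form M x y - form M x y' := by
  have h : y - y' = y + (-1 : ℝ) • y' := by module
  rw [h, form_add_right, form_smul_right]; ring

lemma form_single_single (i j : B) : form M (sroot i) (sroot j) = kM M i j := by
  rw [form_eq_lc, sroot, sroot, Finsupp.linearCombination_single,
    Finsupp.linearCombination_single]
  simp

lemma form_single_right (x : V B) (j : B) :
    form M x (sroot j) = x.sum fun i xi => xi * kM M i j := by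
  rw [form_eq_lc, Finsupp.linearCombination_apply]
  apply Finsupp.sum_congr
  intro i _
  rw [sroot, Finsupp.linearCombination_single]
  simp

lemma form_single_left (y : V B) (i : B) :
    form M (sroot i) y = y.sum fun j yj => yj * kM M i j := by
  rw [form_eq_lc, sroot, Finsupp.linearCombination_single, Finsupp.linearCombination_apply]
  simp

lemma form_single_comm (y : V B) (i : B) :
    form M (sroot i) y = form M y (sroot i) := by
  rw [form_single_left, form_single_right]
  apply Finsupp.sum_congr
  intro j _
  rw [kM_symm]

lemma sroot_ne_zero' {B : Type*} (i : B) : sroot i ≠ (0 : V B) := by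
  intro h
  have := DFunLike.congr_fun h i
  simp [sroot, Finsupp.single_apply] at this

end FormBasics
section RepBasics

variable {M : CoxeterMatrix B} {cs : CoxeterSystem M W} {rho : W →* (V B ≃ₗ[ℝ] V B)}

lemma rho_mul (w w' : W) (x : V B) : rho (w * w') x = rho w (rho w' x) := by
  rw [map_mul]; rfl

lemma rho_one (x : V B) : rho (1 : W) x = x := by
  rw [map_one]; rfl

lemma rho_inv_apply (w : W) (x : V B) : rho w⁻¹ (rho w x) = x := by
  rw [← rho_mul, inv_mul_cancel, rho_one]

lemma rho_apply_inv (w : W) (x : V B) : rho w (rho w⁻¹ x) = x := by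
  rw [← rho_mul, mul_inv_cancel, rho_one]

variable (hrho : IsGeomRep M cs rho)
include hrho

lemma rho_simple_self (i : B) : rho (cs.simple i) (sroot i) = - sroot i := by
  rw [hrho i, form_single_single, kM_diag]
  module

/-- Invariance of the form under a simple reflection. -/
lemma form_rho_simple (i : B) (x y : V B) :
    form M (rho (cs.simple i) x) (rho (cs.simple i) y) = form M x y := by
  rw [hrho i, hrho i]
  rw [form_sub_left, form_sub_right, form_sub_right, form_smul_left, form_smul_left,
    form_smul_right, form_smul_right, form_single_single, kM_diag,
    form_single_comm]
  ring

/-- Invariance of the form. -/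
lemma form_rho (w : W) (x y : V B) : form M (rho w x) (rho w y) = form M x y := by
  obtain ⟨ω, rfl⟩ := cs.wordProd_surjective w
  induction ω with
  | nil => simp [rho_one]
  | cons i ω ih =>
    rw [cs.wordProd_cons, rho_mul, rho_mul, form_rho_simple hrho, ih]

lemma root_norm_one {γ : V B} (hγ : γ ∈ Roots rho) : form M γ γ = 1 := by
  obtain ⟨w, i, rfl⟩ := hγ
  rw [form_rho hrho, form_single_single, kM_diag]

lemma root_ne_zero {γ : V B} (hγ : γ ∈ Roots rho) : γ ≠ 0 := by
  obtain ⟨w, i, rfl⟩ := hγ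
  intro h
  apply sroot_ne_zero' i
  have := congrArg (rho w⁻¹) h
  rwa [rho_inv_apply, map_zero] at this

/-- The reflection formula for conjugates of simple reflections. -/
lemma rho_conj_apply (v : W) (i : B) (x : V B) :
    rho (v * cs.simple i * v⁻¹) x
      = x - (2 * form M x (rho v (sroot i))) • rho v (sroot i) := by
  rw [rho_mul, rho_mul, hrho i]
  rw [map_sub, map_smul, rho_apply_inv]
  congr 2
  rw [← form_rho hrho v (rho v⁻¹ x) (sroot i), rho_apply_inv]

end RepBasics
section Dihedral

/-- `2 cos (π/m)`, with `m = 0` treated as `∞`. -/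
noncomputable def cF (m : ℕ) : ℝ := if m = 0 then 2 else 2 * Real.cos (Real.pi / m)

/-- `sin (k π/m) / sin (π/m)`, with `m = 0` treated as `∞` (limit value `k`). -/
noncomputable def Fseq (m : ℕ) (k : ℕ) : ℝ :=
  if m = 0 then k else Real.sin (k * (Real.pi / m)) / Real.sin (Real.pi / m)

lemma sin_base_pos {m : ℕ} (hm0 : m ≠ 0) (hm1 : m ≠ 1) : 0 < Real.sin (Real.pi / m) := by
  apply Real.sin_pos_of_pos_of_lt_pi
  · positivity
  · apply div_lt_self Real.pi_pos
    exact_mod_cast Nat.lt_of_le_of_ne (Nat.one_le_iff_ne_zero.mpr hm0) (Ne.symm hm1)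

lemma Fseq_zero (m : ℕ) : Fseq m 0 = 0 := by
  unfold Fseq
  split <;> simp

lemma Fseq_one {m : ℕ} (hm1 : m ≠ 1) : Fseq m 1 = 1 := by
  unfold Fseq
  split
  · simp
  · next hm0 =>
    rw [Nat.cast_one, one_mul, div_self (ne_of_gt (sin_base_pos hm0 hm1))]

lemma Fseq_rec {m : ℕ} (hm1 : m ≠ 1) (k : ℕ) :
    Fseq m (k + 2) = cF m * Fseq m (k + 1) - Fseq m k := by
  unfold Fseq cF
  split
  · push_cast; ring
  · next hm0 =>
    have hS := ne_of_gt (sin_base_pos hm0 hm1)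
    set θ := Real.pi / m with hθ
    have h1 : ((k + 2 : ℕ) : ℝ) * θ = (((k + 1 : ℕ) : ℝ) * θ) + θ := by push_cast; ring
    have h2 : ((k : ℕ) : ℝ) * θ = (((k + 1 : ℕ) : ℝ) * θ) - θ := by push_cast; ring
    rw [h1, h2, Real.sin_add, Real.sin_sub]
    field_simp
    ring

lemma Fseq_nonneg {m : ℕ} (hm1 : m ≠ 1) {k : ℕ} (hk : m = 0 ∨ k ≤ m) : 0 ≤ Fseq m k := by
  unfold Fseq
  split
  · positivity
  · next hm0 =>
    rcases hk with h | h
    · exact absurd h hm0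
    apply div_nonneg _ (le_of_lt (sin_base_pos hm0 hm1))
    apply Real.sin_nonneg_of_nonneg_of_le_pi
    · positivity
    · calc (k : ℝ) * (Real.pi / m) ≤ (m : ℝ) * (Real.pi / m) := by
            apply mul_le_mul_of_nonneg_right _ (by positivity)
            exact_mod_cast h
        _ = Real.pi := by
            field_simp

variable {M : CoxeterMatrix B} {cs : CoxeterSystem M W} {rho : W →* (V B ≃ₗ[ℝ] V B)}

lemma cF_eq_kM (i j : B) : cF (M i j) = -2 * kM M i j := by
  unfold cF kM
  split <;> simp_all <;> ring

variable (hrho : IsGeomRep M cs rho)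
include hrho

set_option linter.unusedSectionVars false in
lemma dihedral_root (i j : B) (hij : i ≠ j) (d : ℕ) (hd : M i j = 0 ∨ d + 1 ≤ M i j) :
    rho (cs.wordProd (CoxeterSystem.alternatingWord i j d)) (sroot i)
      = if Even d then Fseq (M i j) (d + 1) • sroot i + Fseq (M i j) d • sroot j
        else Fseq (M i j) d • sroot i + Fseq (M i j) (d + 1) • sroot j := by
  have hm1 : M i j ≠ 1 := M.off_diagonal i j hij
  induction d with
  | zero =>
    simp only [CoxeterSystem.alternatingWord, cs.wordProd_nil, rho_one, if_pos (Even.zero)]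
    rw [Fseq_zero, Fseq_one hm1]
    module
  | succ d ih =>
    have hd' : M i j = 0 ∨ d + 1 ≤ M i j := by omega
    have hrec := Fseq_rec hm1 d
    rw [cF_eq_kM] at hrec
    rw [CoxeterSystem.alternatingWord_succ', cs.wordProd_cons, rho_mul, ih hd']
    by_cases hEd : Even d
    · have hEd1 : ¬ Even (d + 1) := by simp [Nat.even_add_one, hEd]
      rw [if_pos hEd, if_neg hEd1, if_pos hEd]
      rw [hrho j]
      rw [form_add_left, form_smul_left, form_smul_left, form_single_single,
        form_single_single, kM_diag]
      try rw [kM_symm M j i]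
      rw [show d + 1 + 1 = d + 2 from rfl]
      set F0 := Fseq (M.M i j) d with hF0
      set F1 := Fseq (M.M i j) (d + 1) with hF1
      set F2 := Fseq (M.M i j) (d + 2) with hF2
      clear_value F0 F1 F2
      match_scalars
      all_goals try ring
      all_goals linear_combination -hrec
    · have hEd1 : Even (d + 1) := Nat.even_add_one.mpr hEd
      rw [if_neg hEd, if_pos hEd1, if_neg hEd]
      rw [hrho i]
      rw [form_add_left, form_smul_left, form_smul_left, form_single_single,
        form_single_single, kM_diag]
      try rw [kM_symm M j i]
      rw [show d + 1 + 1 = d + 2 from rfl]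
      set F0 := Fseq (M.M i j) d with hF0
      set F1 := Fseq (M.M i j) (d + 1) with hF1
      set F2 := Fseq (M.M i j) (d + 2) with hF2
      clear_value F0 F1 F2
      match_scalars
      all_goals try ring
      all_goals linear_combination -hrec

end Dihedral
section Positivity

variable {M : CoxeterMatrix B} {cs : CoxeterSystem M W} {rho : W →* (V B ≃ₗ[ℝ] V B)}

/-- A vector is nonnegative if all its coordinates are. -/
def PosVec (v : V B) : Prop := ∀ b, 0 ≤ v b

set_option linter.unusedSectionVars false in
/-- Walking down into the dihedral coset. -/
lemma dihedral_walk : ∀ (n : ℕ) (w : W) (i j : B), i ≠ j → cs.length w ≤ n →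
    cs.length (w * cs.simple j) < cs.length w →
    ∃ (v : W) (d : ℕ), 1 ≤ d ∧ w = v * cs.wordProd (CoxeterSystem.alternatingWord i j d) ∧
      cs.length w = cs.length v + d ∧
      cs.length v < cs.length (v * cs.simple i) ∧
      cs.length v < cs.length (v * cs.simple j) := by
  intro n
  induction n with
  | zero => intro w i j _ hle hlt; omega
  | succ n ih =>
    intro w i j hij hle hlt
    have hlen₀ : cs.length (w * cs.simple j) + 1 = cs.length w := by
      rcases cs.length_mul_simple w j with h | h
      · omega
      · omega
    obtain ⟨v₁, hv₁⟩ : ∃ v₁, v₁ = w * cs.simple j := ⟨_, rfl⟩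
    have hv₁w : v₁ * cs.simple j = w := by
      rw [hv₁, mul_assoc, cs.simple_mul_simple_self, mul_one]
    have hlen₁ : cs.length v₁ + 1 = cs.length w := by rw [hv₁]; exact hlen₀
    by_cases hcase : cs.length v₁ < cs.length (v₁ * cs.simple i)
    · have hupj : cs.length v₁ < cs.length (v₁ * cs.simple j) := by
        rw [hv₁w]; omega
      have hweq : w = v₁ * cs.wordProd (CoxeterSystem.alternatingWord i j 1) := by
        have h1 : CoxeterSystem.alternatingWord i j 1 = [j] := rfl
        rw [h1, show cs.wordProd [j] = cs.simple j by simp [cs.wordProd_cons], hv₁w]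
      exact ⟨v₁, 1, le_refl 1, hweq, by omega, hcase, hupj⟩
    · have hlt₁ : cs.length (v₁ * cs.simple i) < cs.length v₁ := by
        rcases cs.length_mul_simple v₁ i with h | h <;> omega
      obtain ⟨v, d, hd1, hveq, hlen, hupj, hupi⟩ :=
        ih v₁ j i hij.symm (by omega) hlt₁
      refine ⟨v, d + 1, by omega, ?_, by omega, hupi, hupj⟩
      rw [CoxeterSystem.alternatingWord_succ, cs.wordProd_concat, ← mul_assoc, ← hveq, hv₁w]

variable (hrho : IsGeomRep M cs rho)
include hrho

set_option linter.unusedSectionVars false in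
/-- The fundamental positivity theorem: if `ℓ(w sᵢ) > ℓ(w)` then `w αᵢ ≥ 0`. -/
lemma posVec_of_ascent' : ∀ (n : ℕ) (w : W) (i : B), cs.length w ≤ n →
    cs.length w < cs.length (w * cs.simple i) → PosVec (rho w (sroot i)) := by
  intro n
  induction n with
  | zero =>
    intro w i hle _
    have hw : w = 1 := cs.length_eq_zero_iff.mp (by omega)
    subst hw
    intro b
    classical
    rw [rho_one, sroot, Finsupp.single_apply]
    split <;> norm_num
  | succ n ih =>
    intro w i hle hasc
    by_cases hw : w = 1
    · subst hw
      intro b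
      classical
      rw [rho_one, sroot, Finsupp.single_apply]
      split <;> norm_num
    · obtain ⟨j, hdesc⟩ := cs.exists_rightDescent_of_ne_one hw
      rw [CoxeterSystem.IsRightDescent] at hdesc
      have hij : i ≠ j := by
        intro h
        rw [h] at hasc
        omega
      obtain ⟨v, d, hd1, hveq, hlen, hupi, hupj⟩ :=
        dihedral_walk (cs := cs) (cs.length w) w i j hij (le_refl _) hdesc
      -- the bound d + 1 ≤ M i j (or M i j = 0)
      have hdbound : M i j = 0 ∨ d + 1 ≤ M i j := by
        by_contra hcon
        push_neg at hcon
        obtain ⟨hM0, hMd⟩ := hcon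
        have hsym : M.M j i = M.M i j := M.isSymm.apply i j
        have hnotred := cs.not_isReduced_alternatingWord (m := d + 1) j i
          (by rw [hsym]; exact hM0) (by rw [hsym]; omega)
        have hlen_le : cs.length (cs.wordProd (CoxeterSystem.alternatingWord j i (d + 1))) ≤ d := by
          have h1 := cs.length_wordProd_le (CoxeterSystem.alternatingWord j i (d + 1))
          rw [CoxeterSystem.length_alternatingWord] at h1
          have h2 : cs.length (cs.wordProd (CoxeterSystem.alternatingWord j i (d + 1))) ≠ d + 1 := by
            intro h
            exact hnotred (by
              simpa [CoxeterSystem.IsReduced, CoxeterSystem.length_alternatingWord] using h)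
          omega
        have hwsi : w * cs.simple i
            = v * cs.wordProd (CoxeterSystem.alternatingWord j i (d + 1)) := by
          rw [CoxeterSystem.alternatingWord_succ, cs.wordProd_concat, hveq, mul_assoc]
        have : cs.length (w * cs.simple i) ≤ cs.length v + d := by
          rw [hwsi]
          calc cs.length (v * cs.wordProd (CoxeterSystem.alternatingWord j i (d + 1)))
              ≤ cs.length v + cs.length (cs.wordProd (CoxeterSystem.alternatingWord j i (d + 1))) :=
                cs.length_mul_le _ _
            _ ≤ cs.length v + d := by omega
        omega
      -- positivity of v αᵢ and v αⱼ by induction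
      have hvle : cs.length v ≤ n := by omega
      have hpi := ih v i hvle hupi
      have hpj := ih v j hvle hupj
      -- the dihedral formula
      have hform := dihedral_root hrho i j hij d hdbound
      have hm1 : M.M i j ≠ 1 := M.off_diagonal i j hij
      have hF1 : 0 ≤ Fseq (M.M i j) d := Fseq_nonneg hm1 (by omega)
      have hF2 : 0 ≤ Fseq (M.M i j) (d + 1) := Fseq_nonneg hm1 (by omega)
      rw [hveq, rho_mul, hform]
      intro b
      by_cases hEd : Even d
      · rw [if_pos hEd, map_add, map_smul, map_smul]
        rw [Finsupp.add_apply, Finsupp.smul_apply, Finsupp.smul_apply, smul_eq_mul, smul_eq_mul]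
        have := hpi b
        have := hpj b
        positivity
      · rw [if_neg hEd, map_add, map_smul, map_smul]
        rw [Finsupp.add_apply, Finsupp.smul_apply, Finsupp.smul_apply, smul_eq_mul, smul_eq_mul]
        have := hpi b
        have := hpj b
        positivity

lemma posVec_of_ascent {w : W} {i : B} (h : cs.length w < cs.length (w * cs.simple i)) :
    PosVec (rho w (sroot i)) :=
  posVec_of_ascent' hrho (cs.length w) w i (le_refl _) h

end Positivity
section Corollaries

variable {M : CoxeterMatrix B} {cs : CoxeterSystem M W} {rho : W →* (V B ≃ₗ[ℝ] V B)}

set_option linter.unusedSectionVars false in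
lemma mem_roots (w : W) (i : B) : rho w (sroot i) ∈ Roots rho := ⟨w, i, rfl⟩

lemma finsupp_decomp (x : V B) : x = ∑ b ∈ x.support, x b • sroot b := by
  conv_lhs => rw [← Finsupp.sum_single x]
  rw [Finsupp.sum]
  apply Finset.sum_congr rfl
  intro b _
  rw [sroot, Finsupp.smul_single, smul_eq_mul, mul_one]

variable (hrho : IsGeomRep M cs rho)
include hrho

lemma negVec_of_descent {w : W} {i : B} (h : cs.length (w * cs.simple i) < cs.length w) :
    ∀ b, (rho w (sroot i)) b ≤ 0 := by
  have h2 : cs.length (w * cs.simple i) < cs.length ((w * cs.simple i) * cs.simple i) := by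
    rw [mul_assoc, cs.simple_mul_simple_self, mul_one]
    exact h
  have hpos := posVec_of_ascent hrho h2
  have heq : rho w (sroot i) = - rho (w * cs.simple i) (sroot i) := by
    have : w = (w * cs.simple i) * cs.simple i := by
      rw [mul_assoc, cs.simple_mul_simple_self, mul_one]
    conv_lhs => rw [this]
    rw [rho_mul, rho_simple_self hrho, map_neg]
  intro b
  rw [heq]
  have := hpos b
  simp only [Finsupp.coe_neg, Pi.neg_apply]
  linarith

lemma ascent_iff {w : W} {i : B} :
    PosVec (rho w (sroot i)) ↔ cs.length w < cs.length (w * cs.simple i) := by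
  constructor
  · intro hpos
    rcases cs.length_mul_simple w i with h | h
    · omega
    · exfalso
      have hneg := negVec_of_descent hrho (by omega : cs.length (w * cs.simple i) < cs.length w)
      have : rho w (sroot i) = 0 := by
        ext b
        exact le_antisymm (hneg b) (hpos b)
      exact root_ne_zero hrho (mem_roots (rho := rho) w i) this
  · exact posVec_of_ascent hrho

lemma rho_faithful {w : W} (h : ∀ x, rho w x = x) : w = 1 := by
  classical
  by_contra hw
  obtain ⟨j, hdesc⟩ := cs.exists_rightDescent_of_ne_one hw
  rw [CoxeterSystem.IsRightDescent] at hdesc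
  have hneg := negVec_of_descent hrho hdesc
  have := hneg j
  rw [h (sroot j)] at this
  simp [sroot, Finsupp.single_apply] at this
  linarith

/-- A root determines its reflection uniquely. -/
lemma reflOf_unique {γ : V B} {t t' : W} (h : ReflOf cs rho γ t) (h' : ReflOf cs rho γ t') :
    t = t' := by
  obtain ⟨v, i, hv, ht⟩ := h
  obtain ⟨v', i', hv', ht'⟩ := h'
  have hval : ∀ x, rho t x = rho t' x := by
    intro x
    rw [← ht, ← ht', rho_conj_apply hrho, rho_conj_apply hrho, hv, hv']
  have : ∀ x, rho (t'⁻¹ * t) x = x := by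
    intro x
    rw [rho_mul, hval, rho_inv_apply]
  have h1 : t'⁻¹ * t = 1 := rho_faithful hrho this
  exact (inv_mul_eq_one.mp h1).symm

end Corollaries
section Parabolic

variable {M : CoxeterMatrix B} {cs : CoxeterSystem M W} {rho : W →* (V B ≃ₗ[ℝ] V B)}

lemma mem_WI_simple {I : Set B} {i : B} (hi : i ∈ I) : cs.simple i ∈ WI cs I :=
  Subgroup.subset_closure ⟨i, hi, rfl⟩

omit [Group W] in
lemma mem_conjSub {G : Type*} [Group G] {u t : G} {H : Subgroup G} :
    t ∈ conjSub u H ↔ u⁻¹ * t * u ∈ H := by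
  rw [conjSub, Subgroup.mem_map_equiv]
  simp [mul_assoc]

set_option linter.unusedSectionVars false in
lemma conjSub_coset {w u : W} {I : Set B} (hu : w⁻¹ * u ∈ WI cs I) :
    conjSub w (WI cs I) = conjSub u (WI cs I) := by
  ext t
  rw [mem_conjSub, mem_conjSub]
  constructor
  · intro h
    have heq : u⁻¹ * t * u = (w⁻¹ * u)⁻¹ * (w⁻¹ * t * w) * (w⁻¹ * u) := by group
    rw [heq]
    exact mul_mem (mul_mem (inv_mem hu) h) hu
  · intro h
    have heq : w⁻¹ * t * w = (w⁻¹ * u) * (u⁻¹ * t * u) * (w⁻¹ * u)⁻¹ := by group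
    rw [heq]
    exact mul_mem (mul_mem hu h) (inv_mem hu)

variable (hrho : IsGeomRep M cs rho)
include hrho

lemma rho_conj_root (a : W) (i : B) :
    rho (a * cs.simple i * a⁻¹) (rho a (sroot i)) = - rho a (sroot i) := by
  rw [rho_mul, rho_mul, rho_inv_apply, rho_simple_self hrho, map_neg]

/-- Elements of the standard parabolic act trivially on coordinates outside `I`. -/
lemma rho_WI_apply {I : Set B} {p : W} (hp : p ∈ WI cs I) :
    ∀ (x : V B) (b : B), b ∉ I → (rho p x) b = x b := by
  classical
  refine Subgroup.closure_induction ?_ ?_ ?_ ?_ hp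
  · rintro x ⟨i, hi, rfl⟩ y b hb
    rw [hrho i y]
    have hib : i ≠ b := fun h => hb (h ▸ hi)
    rw [Finsupp.sub_apply, Finsupp.smul_apply, sroot, Finsupp.single_apply,
      if_neg hib, smul_eq_mul, mul_zero, sub_zero]
  · intro x b _
    rw [rho_one]
  · intro x y _ _ ihx ihy z b hb
    rw [rho_mul, ihx _ b hb, ihy z b hb]
  · intro x _ ihx z b hb
    have := ihx (rho x⁻¹ z) b hb
    rw [rho_apply_inv] at this
    exact this.symm

/-- Roots of a parabolic subgroup `u W_I u⁻¹` with `u` minimal: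
they are `rho u` applied to nonneg vectors supported on `I`. -/
lemma roots_of_parabolic {u : W} {I : Set B}
    (hmin : ∀ i ∈ I, cs.length u < cs.length (u * cs.simple i))
    {γ : V B} (hγ : γ ∈ RootsOf cs rho (conjSub u (WI cs I))) (hpos : PosVec γ) :
    PosVec (rho u⁻¹ γ) ∧ ∀ b ∉ I, (rho u⁻¹ γ) b = 0 := by
  classical
  obtain ⟨hroot, t, htG, v, jj, hv, ht⟩ := hγ
  have hp : u⁻¹ * t * u ∈ WI cs I := mem_conjSub.mp htG
  have hδv : rho u⁻¹ γ = rho (u⁻¹ * v) (sroot jj) := by rw [← hv, rho_mul]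
  have hconj : u⁻¹ * t * u = (u⁻¹ * v) * cs.simple jj * (u⁻¹ * v)⁻¹ := by
    rw [← ht]; group
  have hpδ : rho (u⁻¹ * t * u) (rho u⁻¹ γ) = - rho u⁻¹ γ := by
    rw [hδv, hconj]
    exact rho_conj_root hrho (u⁻¹ * v) jj
  have hsupp : ∀ b ∉ I, (rho u⁻¹ γ) b = 0 := by
    intro b hb
    have h1 := rho_WI_apply hrho hp (rho u⁻¹ γ) b hb
    rw [hpδ] at h1
    rw [Finsupp.neg_apply] at h1
    linarith
  refine ⟨?_, hsupp⟩
  rcases cs.length_mul_simple (u⁻¹ * v) jj with h | h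
  · rw [hδv]
    exact posVec_of_ascent hrho (by omega)
  · exfalso
    have hne := cs.length_mul_simple_ne (u⁻¹ * v) jj
    have hneg : ∀ b, (rho u⁻¹ γ) b ≤ 0 := by
      rw [hδv]
      exact negVec_of_descent hrho (by omega)
    -- γ is a nonpositive combination of positive roots, but also positive: so γ = 0.
    have hγeq : γ = rho u (rho u⁻¹ γ) := (rho_apply_inv u γ).symm
    have hzero : γ = 0 := by
      ext b'
      have hsum : γ = ∑ b ∈ (rho u⁻¹ γ).support, (rho u⁻¹ γ) b • rho u (sroot b) := by
        conv_lhs => rw [hγeq, finsupp_decomp (rho u⁻¹ γ)]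
        rw [map_sum]
        exact Finset.sum_congr rfl fun b _ => by rw [map_smul]
      have hle : γ b' ≤ 0 := by
        rw [hsum, Finsupp.finset_sum_apply]
        apply Finset.sum_nonpos
        intro b hb
        rw [Finsupp.smul_apply, smul_eq_mul]
        have hbI : b ∈ I := by
          by_contra hbI
          exact Finsupp.mem_support_iff.mp hb (hsupp b hbI)
        have h3 : 0 ≤ (rho u (sroot b)) b' := posVec_of_ascent hrho (hmin b hbI) b'
        have h4 : (rho u⁻¹ γ) b ≤ 0 := hneg b
        nlinarith
      have hge : 0 ≤ γ b' := hpos b'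
      simp only [Finsupp.coe_zero, Pi.zero_apply]
      linarith
    exact root_ne_zero hrho hroot hzero

end Parabolic

/-- For a parabolic subgroup `G = w W_I w⁻¹`, with `u = w^I` the shortest element of
the coset `w W_I`, one has `Π(G) = w^I • Π_I` and `S(G) = w^I I (w^I)⁻¹`. -/
theorem stmt6 (M : CoxeterMatrix B) (cs : CoxeterSystem M W)
    (rho : W →* (V B ≃ₗ[ℝ] V B)) (hrho : IsGeomRep M cs rho)
    (w u : W) (I : Set B)
    (hu : w⁻¹ * u ∈ WI cs I)
    (hmin : ∀ v : W, w⁻¹ * v ∈ WI cs I → cs.length u ≤ cs.length v) :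
    SimpleOf cs rho (conjSub w (WI cs I)) = (fun v => rho u v) '' (sroot '' I) ∧
    CanGens cs rho (conjSub w (WI cs I)) =
      (fun t => u * t * u⁻¹) '' (cs.simple '' I) := by
  classical
  have hG : conjSub w (WI cs I) = conjSub u (WI cs I) := conjSub_coset hu
  have hmin' : ∀ i ∈ I, cs.length u < cs.length (u * cs.simple i) := by
    intro i hi
    have h1 : w⁻¹ * (u * cs.simple i) ∈ WI cs I := by
      rw [← mul_assoc]
      exact mul_mem hu (mem_WI_simple hi)
    have h2 := hmin _ h1
    have h3 := cs.length_mul_simple_ne u i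
    omega
  have hKpos : ∀ i ∈ I, PosVec (rho u (sroot i)) := fun i hi =>
    posVec_of_ascent hrho (hmin' i hi)
  have hKmem : ∀ i ∈ I, rho u (sroot i) ∈ RootsOf cs rho (conjSub u (WI cs I)) := by
    intro i hi
    refine ⟨mem_roots u i, u * cs.simple i * u⁻¹, ?_, ⟨u, i, rfl, rfl⟩⟩
    rw [mem_conjSub]
    have : u⁻¹ * (u * cs.simple i * u⁻¹) * u = cs.simple i := by group
    rw [this]
    exact mem_WI_simple hi
  have hSimple : SimpleOf cs rho (conjSub u (WI cs I)) = (fun v => rho u v) '' (sroot '' I) := by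
    apply Set.Subset.antisymm
    · rintro γ ⟨hroots, hpos, hind⟩
      obtain ⟨hδpos, hδsupp⟩ := roots_of_parabolic hrho hmin' hroots hpos.2
      have hγδ : γ = rho u (rho u⁻¹ γ) := (rho_apply_inv u γ).symm
      set δ := rho u⁻¹ γ with hδdef
      have hsuppI : ∀ b ∈ δ.support, b ∈ I := by
        intro b hb
        by_contra hbI
        exact Finsupp.mem_support_iff.mp hb (hδsupp b hbI)
      have hsum : γ = ∑ b ∈ δ.support, δ b • rho u (sroot b) := by
        conv_lhs => rw [hγδ, finsupp_decomp δ]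
        rw [map_sum]
        exact Finset.sum_congr rfl fun b _ => by rw [map_smul]
      -- apply indecomposability
      set k := δ.support.card with hk
      set e := δ.support.equivFin with he
      have hβall := hind k (fun m => δ (e.symm m)) (fun m => rho u (sroot ((e.symm m) : B)))
        (fun m => by
          have hmem := (e.symm m).2
          have := Finsupp.mem_support_iff.mp hmem
          have h0 := hδpos ((e.symm m) : B)
          cases lt_or_eq_of_le h0 with
          | inl h => exact h
          | inr h => exact absurd h.symm this)
        (fun m => by
          have hbI := hsuppI _ (e.symm m).2
          exact ⟨hKmem _ hbI, mem_roots u _, hKpos _ hbI⟩)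
        (by
          rw [hsum, ← Finset.sum_coe_sort δ.support (fun b => δ b • rho u (sroot b))]
          exact (Equiv.sum_comp e.symm (fun x => δ (x : B) • rho u (sroot (x : B)))).symm)
      -- δ.support is nonempty
      have hne : δ.support.Nonempty := by
        rw [Finset.nonempty_iff_ne_empty]
        intro hemp
        have : δ = 0 := by
          ext b
          by_contra hb
          have : b ∈ δ.support := Finsupp.mem_support_iff.mpr (by simpa using hb)
          rw [hemp] at this
          exact absurd this (Finset.notMem_empty b)
        have hγ0 : γ = 0 := by
          rw [hγδ, this, map_zero]
        exact root_ne_zero hrho hroots.1 hγ0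
      obtain ⟨b0, hb0⟩ := hne
      have hγb0 := hβall (e ⟨b0, hb0⟩)
      have hγb0' : rho u (sroot b0) = γ := by simpa using hγb0
      exact ⟨sroot b0, ⟨b0, hsuppI b0 hb0, rfl⟩, hγb0'⟩
    · rintro γ ⟨x, ⟨i, hi, rfl⟩, rfl⟩
      refine ⟨hKmem i hi, ⟨mem_roots u i, hKpos i hi⟩, ?_⟩
      intro k c β hc hβ hsum0 m
      have hsum : rho u (sroot i) = ∑ m', c m' • β m' := hsum0
      have hβm := hβ m
      obtain ⟨hδmpos, hδmsupp⟩ := roots_of_parabolic hrho hmin' hβm.1 hβm.2.2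
      -- pull back the sum by u⁻¹
      have hsum' : sroot i = ∑ m', c m' • rho u⁻¹ (β m') := by
        have h1 : rho u⁻¹ (rho u (sroot i)) = sroot i := rho_inv_apply u (sroot i)
        rw [← h1, hsum, map_sum]
        exact Finset.sum_congr rfl fun m' _ => by rw [map_smul]
      -- all coordinates of δm vanish off i
      have hvanish : ∀ b, b ≠ i → rho u⁻¹ (β m) b = 0 := by
        intro b hb
        have hco : (sroot i) b = 0 := by
          rw [sroot, Finsupp.single_apply, if_neg (fun h => hb h.symm)]
        have hco2 : (0:ℝ) = ∑ m', c m' * (rho u⁻¹ (β m')) b := by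
          rw [← hco]
          conv_lhs => rw [hsum']
          rw [Finsupp.finset_sum_apply]
          exact Finset.sum_congr rfl fun m' _ => by rw [Finsupp.smul_apply, smul_eq_mul]
        have hterm : ∀ m' ∈ Finset.univ, (0:ℝ) ≤ c m' * (rho u⁻¹ (β m')) b := by
          intro m' _
          obtain ⟨hδm'pos, _⟩ := roots_of_parabolic hrho hmin' (hβ m').1 (hβ m').2.2
          exact mul_nonneg (le_of_lt (hc m')) (hδm'pos b)
        have := (Finset.sum_eq_zero_iff_of_nonneg hterm).mp hco2.symm m (Finset.mem_univ m)
        rcases mul_eq_zero.mp this with h | h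
        · exact absurd h (ne_of_gt (hc m))
        · exact h
      -- δm is a multiple of sroot i
      have hmul : rho u⁻¹ (β m) = (rho u⁻¹ (β m) i) • sroot i := by
        ext b
        rw [Finsupp.smul_apply, sroot, Finsupp.single_apply]
        by_cases hbi : i = b
        · subst hbi; simp
        · rw [if_neg hbi, smul_zero]
          exact hvanish b (fun h => hbi h.symm)
      -- δm has norm 1
      have hnorm : form M (rho u⁻¹ (β m)) (rho u⁻¹ (β m)) = 1 := by
        rw [form_rho hrho]
        exact root_norm_one hrho hβm.1.1
      have hsq : (rho u⁻¹ (β m) i) * (rho u⁻¹ (β m) i) = 1 := by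
        have h2 := hnorm
        conv_lhs at h2 => rw [hmul]
        rw [form_smul_left, form_smul_right, form_single_single, kM_diag] at h2
        linarith [h2]
      have hone : rho u⁻¹ (β m) i = 1 := by
        have h0 := hδmpos i
        nlinarith
      have hfin : rho u⁻¹ (β m) = sroot i := by
        rw [hmul, hone, one_smul]
      have : β m = rho u (sroot i) := by
        rw [← hfin, rho_apply_inv]
      exact this
  have hCan : CanGens cs rho (conjSub u (WI cs I))
      = (fun t => u * t * u⁻¹) '' (cs.simple '' I) := by
    apply Set.Subset.antisymm
    · rintro t ⟨γ, hγS, hrefl⟩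
      rw [hSimple] at hγS
      obtain ⟨x, ⟨i, hi, rfl⟩, rfl⟩ := hγS
      have h2 : ReflOf cs rho (rho u (sroot i)) (u * cs.simple i * u⁻¹) := ⟨u, i, rfl, rfl⟩
      have heq := reflOf_unique hrho hrefl h2
      exact ⟨cs.simple i, ⟨i, hi, rfl⟩, heq.symm⟩
    · rintro t ⟨x, ⟨i, hi, rfl⟩, rfl⟩
      refine ⟨rho u (sroot i), ?_, ⟨u, i, rfl, rfl⟩⟩
      rw [hSimple]
      exact ⟨sroot i, ⟨i, hi, rfl⟩, rfl⟩
  rw [hG]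
  exact ⟨hSimple, hCan⟩

end CoxPaper
end

section
/- If H ≤ G are two reflection subgroups of a Coxeter group W, then Π(G) ∩ Φ(H) ⊆ Π(H) and S(G) ∩ H ⊆ S(H). -/
namespace CoxPaper

variable {B W : Type*} [Group W]

variable {M : CoxeterMatrix B}

/-- If `H ≤ G` are reflection subgroups, then `Π(G) ∩ Φ(H) ⊆ Π(H)` and
`S(G) ∩ H ⊆ S(H)`. -/
theorem stmt8 (M : CoxeterMatrix B) (cs : CoxeterSystem M W)
    (rho : W →* (V B ≃ₗ[ℝ] V B)) (hrho : IsGeomRep M cs rho)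
    (H G : Subgroup W) (hH : IsReflSubgroup cs H) (hG : IsReflSubgroup cs G)
    (hle : H ≤ G) :
    SimpleOf cs rho G ∩ RootsOf cs rho H ⊆ SimpleOf cs rho H ∧
    ∀ t ∈ CanGens cs rho G, t ∈ H → t ∈ CanGens cs rho H := by
  have hsub : RootsOf cs rho H ⊆ RootsOf cs rho G := by
    rintro γ ⟨hγ, t, htH, hrefl⟩
    exact ⟨hγ, t, hle htH, hrefl⟩
  have key : SimpleOf cs rho G ∩ RootsOf cs rho H ⊆ SimpleOf cs rho H := by
    rintro γ ⟨⟨_, hpos, hind⟩, hγH⟩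
    refine ⟨hγH, hpos, fun k c β hc hβ hsum => ?_⟩
    exact hind k c β hc (fun m => ⟨hsub (hβ m).1, (hβ m).2⟩) hsum
  refine ⟨key, ?_⟩
  rintro t ⟨γ, hγG, hrefl⟩ htH
  have hγH : γ ∈ RootsOf cs rho H := ⟨hγG.1.1, t, htH, hrefl⟩
  exact ⟨γ, key ⟨hγG, hγH⟩, hrefl⟩

end CoxPaper
end

section
/- In the Weyl group W of type G₂ (the dihedral group of order 12 with generators s, t and relation (st)⁶ = 1), the intersection of the reflection subgroup generated by {s, tstst} and the reflection subgroup generated by {t, ststs} is the subgroup generated by the central longest element (st)³, which is not a reflection subgroup; hence the intersection of two reflection subgroups of a Coxeter group need not be a reflection subgroup. -/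
namespace CoxPaper

variable {B W : Type*} [Group W]

variable {M : CoxeterMatrix B}

section Aux

/-- Klein-four type subgroup on `{1, a, b, a*b}` for commuting involutions. -/
def quad {G : Type*} [Group G] (a b : G) (ha : a * a = 1) (hb : b * b = 1)
    (hab : b * a = a * b) : Subgroup G where
  carrier := {1, a, b, a * b}
  one_mem' := Or.inl rfl
  mul_mem' := by
    have haa : ∀ x : G, a * (a * x) = x := fun x => by rw [← mul_assoc, ha, one_mul]
    have hbb : ∀ x : G, b * (b * x) = x := fun x => by rw [← mul_assoc, hb, one_mul]
    have hba : ∀ x : G, b * (a * x) = a * (b * x) := fun x => by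
      rw [← mul_assoc, hab, mul_assoc]
    rintro x y (rfl | rfl | rfl | rfl) (rfl | rfl | rfl | rfl) <;>
      simp [Set.mem_insert_iff, mul_assoc, ha, hb, hab, haa, hbb, hba]
  inv_mem' := by
    have ha' : a⁻¹ = a := inv_eq_of_mul_eq_one_right ha
    have hb' : b⁻¹ = b := inv_eq_of_mul_eq_one_right hb
    rintro x (rfl | rfl | rfl | rfl) <;>
      simp [Set.mem_insert_iff, mul_inv_rev, ha', hb', hab]

theorem mem_quad {G : Type*} [Group G] {a b : G} (ha : a * a = 1) (hb : b * b = 1)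
    (hab : b * a = a * b) {x : G} :
    x ∈ quad a b ha hb hab ↔ x = 1 ∨ x = a ∨ x = b ∨ x = a * b := Iff.rfl

end Aux

/-- In the Coxeter group of type `G₂` (dihedral of order 12) with generators `s, t`,
the intersection of the reflection subgroups generated by `{s, tstst}` and by
`{t, ststs}` is the subgroup generated by the longest element `(st)³`, which is not a
reflection subgroup; hence the intersection of two reflection subgroups need not be a
reflection subgroup. -/
theorem stmt19 {W : Type*} [Group W] (M : CoxeterMatrix Bool)
    (hM : ∀ i j : Bool, i ≠ j → M i j = 6) (cs : CoxeterSystem M W) :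
    (Subgroup.closure {cs.simple false,
        cs.simple true * cs.simple false * cs.simple true * cs.simple false *
          cs.simple true} ⊓
      Subgroup.closure {cs.simple true,
        cs.simple false * cs.simple true * cs.simple false * cs.simple true *
          cs.simple false} =
      Subgroup.closure {(cs.simple false * cs.simple true) ^ 3}) ∧
    IsReflSubgroup cs (Subgroup.closure {cs.simple false,
      cs.simple true * cs.simple false * cs.simple true * cs.simple false *
        cs.simple true}) ∧
    IsReflSubgroup cs (Subgroup.closure {cs.simple true,
      cs.simple false * cs.simple true * cs.simple false * cs.simple true *
        cs.simple false}) ∧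
    ¬ IsReflSubgroup cs (Subgroup.closure {(cs.simple false * cs.simple true) ^ 3}) := by
  set a := cs.simple false with ha_def
  set b := cs.simple true with hb_def
  have haa : a * a = 1 := cs.simple_mul_simple_self false
  have hbb : b * b = 1 := cs.simple_mul_simple_self true
  have hacan : ∀ x : W, a * (a * x) = x := fun x => by rw [← mul_assoc, haa, one_mul]
  have hbcan : ∀ x : W, b * (b * x) = x := fun x => by rw [← mul_assoc, hbb, one_mul]
  have hainv : a⁻¹ = a := inv_eq_of_mul_eq_one_right haa
  have hbinv : b⁻¹ = b := inv_eq_of_mul_eq_one_right hbb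
  have h6 : (a * b) ^ 6 = 1 := by
    have := cs.simple_mul_simple_pow false true
    rwa [hM false true (by decide)] at this
  -- homomorphism to the dihedral group of order 12
  set f : Bool → DihedralGroup 6 := fun c => DihedralGroup.sr (if c then 1 else 0) with hf_def
  have hf : M.IsLiftable f := by
    intro i j
    rcases eq_or_ne i j with rfl | hij
    · rw [M.diagonal, pow_one]; cases i <;> decide
    · rw [hM i j hij]; cases i <;> cases j <;> first | (exact absurd rfl hij) | decide
  set φ := cs.lift ⟨f, hf⟩ with hφ_def
  have hφa : φ a = DihedralGroup.sr 0 := cs.lift_apply_simple hf false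
  have hφb : φ b = DihedralGroup.sr 1 := cs.lift_apply_simple hf true
  have hφab : φ (a * b) = DihedralGroup.r 1 := by
    rw [map_mul, hφa, hφb]; decide
  have h2 : (a * b) ^ 2 ≠ 1 := by
    intro h
    have := congrArg φ h
    rw [map_pow, hφab, map_one] at this
    exact absurd this (by decide)
  have h3 : (a * b) ^ 3 ≠ 1 := by
    intro h
    have := congrArg φ h
    rw [map_pow, hφab, map_one] at this
    exact absurd this (by decide)
  have h4 : (a * b) ^ 4 ≠ 1 := by
    intro h
    apply h2
    have h' : (a * b) ^ 4 * (a * b) ^ 2 = 1 := by rw [← pow_add]; exact h6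
    rwa [h, one_mul] at h'
  -- the central longest element
  set z := (a * b) ^ 3 with hz_def
  have hzz : z * z = 1 := by rw [hz_def, ← pow_add]; exact h6
  have hzinv : z⁻¹ = z := inv_eq_of_mul_eq_one_right hzz
  have hzword : z = a * (b * (a * (b * (a * b)))) := by
    rw [hz_def]; simp [pow_succ, mul_assoc]
  have hzword' : z = b * (a * (b * (a * (b * a)))) := by
    rw [← hzinv, hzword]
    simp [mul_inv_rev, hainv, hbinv, mul_assoc]
  have hcomm_a : z * a = a * z := by
    conv_lhs => rw [hzword']
    conv_rhs => rw [hzword]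
    simp [mul_assoc, haa, hbb, hacan, hbcan]
  have hcomm_b : z * b = b * z := by
    conv_lhs => rw [hzword]
    conv_rhs => rw [hzword']
    simp [mul_assoc, haa, hbb, hacan, hbcan]
  have hbab : b * a * b * a * b = a * z := by
    rw [hzword, hacan]; simp [mul_assoc]
  have haba : a * b * a * b * a = b * z := by
    rw [hzword', hbcan]; simp [mul_assoc]
  -- parity
  have hπa : cs.lengthParity a = Multiplicative.ofAdd 1 := cs.lengthParity_simple false
  have hπb : cs.lengthParity b = Multiplicative.ofAdd 1 := cs.lengthParity_simple true
  have hπz : cs.lengthParity z = 1 := by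
    rw [hz_def, map_pow, map_mul, hπa, hπb]; decide
  -- distinctness facts
  have hne_a1 : a ≠ 1 := by
    intro h; rw [h, map_one] at hπa; exact absurd hπa (by decide)
  have hne_ab : a ≠ b := by
    intro h; exact h2 (by rw [h, hbb, one_pow])
  have hne_az : a ≠ z := by
    intro h; rw [← h, hπa] at hπz; exact absurd hπz (by decide)
  have hne_abz : a ≠ b * z := by
    intro h
    apply h4
    have hzba : b * a = z := by rw [h, hbcan]
    have : (a * b) ^ 4 = (a * b) ^ 3 * (a * b) := by rw [← pow_succ]
    rw [this, ← hz_def, ← hzba]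
    simp [mul_assoc, hacan, hbb]
  have hne_az1 : a * z ≠ 1 := by
    intro h
    exact hne_az (by rw [eq_inv_of_mul_eq_one_left h, hzinv])
  have hne_azb : a * z ≠ b := by
    intro h
    apply h2
    have hzab : z = a * b := by rw [← h]; exact (hacan z).symm
    have h' : (a * b) ^ 2 * (a * b) = 1 * (a * b) := by
      rw [← pow_succ, ← hz_def, hzab, one_mul]
    exact mul_right_cancel h'
  have hne_azz : a * z ≠ z := by
    intro h
    exact hne_a1 (mul_right_cancel (b := z) (by rw [h, one_mul]))
  have hne_azbz : a * z ≠ b * z := by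
    intro h
    exact hne_ab (mul_right_cancel h)
  -- the two Klein subgroups
  set K : Subgroup W := quad a z haa hzz hcomm_a with hK_def
  set K' : Subgroup W := quad b z hbb hzz hcomm_b with hK'_def
  have hAK : Subgroup.closure {a, b * a * b * a * b} ≤ K := by
    rw [Subgroup.closure_le]
    rintro x hx
    simp only [Set.mem_insert_iff, Set.mem_singleton_iff] at hx
    rcases hx with rfl | rfl
    · exact Or.inr (Or.inl rfl)
    · rw [hbab] at *
      exact Or.inr (Or.inr (Or.inr rfl))
  have hBK' : Subgroup.closure {b, a * b * a * b * a} ≤ K' := by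
    rw [Subgroup.closure_le]
    rintro x hx
    simp only [Set.mem_insert_iff, Set.mem_singleton_iff] at hx
    rcases hx with rfl | rfl
    · exact Or.inr (Or.inl rfl)
    · rw [haba] at *
      exact Or.inr (Or.inr (Or.inr rfl))
  -- z belongs to both closures
  have hzA : z ∈ Subgroup.closure ({a, b * a * b * a * b} : Set W) := by
    have hzeq : z = a * (b * a * b * a * b) := by rw [hbab, hacan]
    rw [hzeq]
    exact mul_mem (Subgroup.subset_closure (Set.mem_insert _ _))
      (Subgroup.subset_closure (Set.mem_insert_of_mem _ rfl))
  have hzB : z ∈ Subgroup.closure ({b, a * b * a * b * a} : Set W) := by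
    have hzeq : z = (a * b * a * b * a) * b := by
      rw [haba, mul_assoc, hcomm_b, hbcan]
    rw [hzeq]
    exact mul_mem (Subgroup.subset_closure (Set.mem_insert_of_mem _ rfl))
      (Subgroup.subset_closure (Set.mem_insert _ _))
  refine ⟨?_, ⟨{a, b * a * b * a * b}, ?_, rfl⟩, ⟨{b, a * b * a * b * a}, ?_, rfl⟩, ?_⟩
  · apply le_antisymm
    · intro g hg
      rw [Subgroup.mem_inf] at hg
      have hK1 : g = 1 ∨ g = a ∨ g = z ∨ g = a * z := (mem_quad _ _ _).mp (hAK hg.1)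
      have hK2 : g = 1 ∨ g = b ∨ g = z ∨ g = b * z := (mem_quad _ _ _).mp (hBK' hg.2)
      rcases hK1 with rfl | rfl | rfl | rfl
      · exact one_mem _
      · rcases hK2 with h | h | h | h
        · exact absurd h hne_a1
        · exact absurd h hne_ab
        · exact absurd h hne_az
        · exact absurd h hne_abz
      · exact Subgroup.subset_closure rfl
      · rcases hK2 with h | h | h | h
        · exact absurd h hne_az1
        · exact absurd h hne_azb
        · exact absurd h hne_azz
        · exact absurd h hne_azbz
    · rw [Subgroup.closure_le, Set.singleton_subset_iff]
      exact Subgroup.mem_inf.mpr ⟨hzA, hzB⟩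
  · intro u hu
    simp only [Set.mem_insert_iff, Set.mem_singleton_iff] at hu
    rcases hu with rfl | rfl
    · exact cs.isReflection_simple false
    · exact ⟨b * a, true, by rw [mul_inv_rev, hainv, hbinv]; simp [mul_assoc]; rfl⟩
  · intro u hu
    simp only [Set.mem_insert_iff, Set.mem_singleton_iff] at hu
    rcases hu with rfl | rfl
    · exact cs.isReflection_simple true
    · exact ⟨a * b, false, by rw [mul_inv_rev, hainv, hbinv]; simp [mul_assoc]; rfl⟩
  · -- not a reflection subgroup
    rw [IsReflSubgroup]
    have hmem : ∀ g ∈ Subgroup.closure ({z} : Set W), g = 1 ∨ g = z := by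
      intro g hg
      rw [Subgroup.mem_closure_singleton] at hg
      obtain ⟨n, rfl⟩ := hg
      have hz2 : z ^ (2 : ℤ) = 1 := by
        rw [show (2 : ℤ) = ((2 : ℕ) : ℤ) from rfl, zpow_natCast, sq, hzz]
      have key : z ^ n = z ^ (n % 2) := by
        conv_lhs => rw [← Int.mul_ediv_add_emod n 2]
        rw [zpow_add, zpow_mul, hz2, one_zpow, one_mul]
      rcases Int.emod_two_eq_zero_or_one n with h | h <;> rw [key, h]
      · exact Or.inl (zpow_zero z)
      · exact Or.inr (zpow_one z)
    have hrefl_parity : ∀ u : W, cs.IsReflection u →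
        cs.lengthParity u = Multiplicative.ofAdd 1 := by
      rintro u ⟨w, i, rfl⟩
      rw [map_mul, map_mul, map_inv, cs.lengthParity_simple,
        mul_comm (cs.lengthParity w), mul_assoc, mul_inv_cancel, mul_one]
    rintro ⟨T, hT, hTeq⟩
    have hTfalse : ∀ u ∈ T, False := by
      intro u hu
      have huZ : u ∈ Subgroup.closure ({z} : Set W) := by
        rw [hTeq]; exact Subgroup.subset_closure hu
      rcases hmem u huZ with rfl | rfl
      · have := hrefl_parity 1 (hT 1 hu)
        rw [map_one] at this
        exact absurd this (by decide)
      · have := hrefl_parity z (hT z hu)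
        rw [hπz] at this
        exact absurd this (by decide)
    have hzT : z ∈ Subgroup.closure T := by
      rw [← hTeq]; exact Subgroup.subset_closure rfl
    have hTbot : Subgroup.closure T ≤ ⊥ := by
      rw [Subgroup.closure_le]
      intro u hu
      exact (hTfalse u hu).elim
    exact h3 (Subgroup.mem_bot.mp (hTbot hzT))



end CoxPaper
end
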